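/- Let μ : ℝ → ℝ be continuous, π(a) := exp(−∫₀ᵃ μ(h) dh), and let ν : ℝ × ℝ → ℝ be continuous. Suppose n : ℝ × ℝ → ℝ is continuously differentiable on the region {(t,a) : 0 ≤ t ≤ a}, satisfies (∂/∂t + ∂/∂a) n(t,a) = ν(t,a) − μ(a) n(t,a) there, and satisfies n(0,a) = n₀(a) for all a ≥ 0. Then necessarily n(t,a) = π(a) · ( n₀(a−t)/π(a−t) + ∫_{a−t}^{a} ν(τ + t − a, τ)/π(τ) dτ ) for all 0 ≤ t ≤ a; in particular, the solution on this region is uniquely determined by the initial data n₀. -/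

import Mathlib

/-!
On the characteristic `x ↦ (x + t - a, x)` through `(t, a)` the equation becomes the linear ODE
`φ' = ν - μ φ` in the age variable `x`. Since `π' = -μ π`, the quotient `φ / π` has derivative
`ν / π`, and the fundamental theorem of calculus from the cohort's age at time `0`, `a - t`, up to
`a` gives the formula.
-/

open Set intervalIntegral

-- `(φ / p)' = f / p`: the loss terms `-m φ` and `-m p` cancel in the quotient.
theorem div_eq_div_add_integral_of_hasDerivAt {m f φ p : ℝ → ℝ} {a b : ℝ}
    (hp : ∀ x ∈ uIcc a b, HasDerivAt p (-(m x * p x)) x)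
    (hp₀ : ∀ x ∈ uIcc a b, p x ≠ 0)
    (hφ : ∀ x ∈ uIcc a b, HasDerivAt φ (f x - m x * φ x) x)
    (hf : IntervalIntegrable (fun x => f x / p x) MeasureTheory.volume a b) :
    φ b / p b = φ a / p a + ∫ x in a..b, f x / p x := by
  have hquot : ∀ x ∈ uIcc a b, HasDerivAt (fun x => φ x / p x) (f x / p x) x := by
    intro x hx
    refine ((hφ x hx).div (hp x hx) (hp₀ x hx)).congr_deriv ?_
    field_simp [hp₀ x hx]
    ring
  rw [integral_eq_sub_of_hasDerivAt hquot hf]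
  ring

theorem hasDerivAt_exp_neg_integral {μ : ℝ → ℝ} (hμ : Continuous μ) (x : ℝ) :
    HasDerivAt (fun a => Real.exp (-∫ h in (0:ℝ)..a, μ h))
      (-(μ x * Real.exp (-∫ h in (0:ℝ)..x, μ h))) x := by
  have hexponent : HasDerivAt (fun a => -∫ h in (0:ℝ)..a, μ h) (-μ x) x :=
    (hμ.integral_hasStrictDerivAt 0 x).hasDerivAt.neg
  convert hexponent.exp using 1
  ring

theorem HasDerivAt.along_characteristic {g : ℝ × ℝ → ℝ} {D d y : ℝ}
    (h : HasDerivAt (fun s => g (y + d + s, y + s)) D 0) :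
    HasDerivAt (fun x => g (x + d, x)) D y := by
  have h' : HasDerivAt (fun s => g (y + d + s, y + s)) D (y - y) := by rwa [sub_self]
  have hreparam : (fun x => g (x + d, x)) = fun x => g (y + d + (x - y), y + (x - y)) := by
    funext x
    congr 2 <;> ring
  rw [hreparam]
  exact h'.comp_sub_const y y

theorem characteristics_uniqueness_below_diagonal_general
    (μ : ℝ → ℝ) (hμ : Continuous μ)
    (surv : ℝ → ℝ) (hsurv : ∀ a, surv a = Real.exp (-∫ h in (0:ℝ)..a, μ h))
    (ν : ℝ × ℝ → ℝ) (hν : Continuous ν)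
    (n : ℝ × ℝ → ℝ) (n₀ : ℝ → ℝ)
    (hpde : ∀ t a : ℝ, 0 ≤ t → t ≤ a →
      HasDerivAt (fun s => n (t + s, a + s)) (ν (t, a) - μ a * n (t, a)) 0)
    (hic : ∀ a : ℝ, 0 ≤ a → n (0, a) = n₀ a) :
    ∀ t a : ℝ, 0 ≤ t → t ≤ a →
      n (t, a) = surv a * (n₀ (a - t) / surv (a - t) +
        ∫ τ in (a - t)..a, ν (τ + t - a, τ) / surv τ) := by
  intro t a ht hta
  have hsurv_deriv : ∀ x, HasDerivAt surv (-(μ x * surv x)) x := by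
    rw [funext hsurv]
    exact hasDerivAt_exp_neg_integral hμ
  have hsurv₀ : ∀ x, surv x ≠ 0 := fun x => by rw [hsurv]; exact (Real.exp_pos _).ne'
  have hsurv_cont : Continuous surv :=
    continuous_iff_continuousAt.2 fun x => (hsurv_deriv x).continuousAt
  have hchar : ∀ τ ∈ uIcc (a - t) a, HasDerivAt (fun x => n (x + (t - a), x))
      (ν (τ + (t - a), τ) - μ τ * n (τ + (t - a), τ)) τ := by
    intro τ hτ
    rw [uIcc_of_le (by linarith)] at hτ
    exact (hpde _ τ (by linarith [hτ.1]) (by linarith [hτ.2])).along_characteristic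
  have hsource : Continuous fun τ => ν (τ + (t - a), τ) / surv τ :=
    (hν.comp (by fun_prop)).div hsurv_cont hsurv₀
  have hcohort := div_eq_div_add_integral_of_hasDerivAt (fun x _ => hsurv_deriv x)
    (fun x _ => hsurv₀ x) hchar (hsource.intervalIntegrable _ _)
  simp only [add_sub_cancel, sub_add_cancel, sub_self, ← add_sub_assoc] at hcohort
  rw [← hic _ (by linarith), ← hcohort, mul_div_cancel₀ _ (hsurv₀ a)]

/-- Uniqueness on the region {(t,a) : 0 ≤ t ≤ a}: any C¹ solution of
(∂/∂t + ∂/∂a) n = ν − μ n with initial data n(0,a) = n₀(a) is given by the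
method-of-characteristics formula, hence is uniquely determined by n₀. -/
theorem characteristics_uniqueness_below_diagonal
    (μ : ℝ → ℝ) (hμ : Continuous μ)
    (surv : ℝ → ℝ) (hsurv : ∀ a, surv a = Real.exp (-∫ h in (0:ℝ)..a, μ h))
    (ν : ℝ × ℝ → ℝ) (hν : Continuous ν)
    (n : ℝ × ℝ → ℝ) (n₀ : ℝ → ℝ)
    (hreg : ContDiffOn ℝ 1 n {q : ℝ × ℝ | 0 ≤ q.1 ∧ q.1 ≤ q.2})
    (hpde : ∀ t a : ℝ, 0 ≤ t → t ≤ a →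
      HasDerivAt (fun s => n (t + s, a + s)) (ν (t, a) - μ a * n (t, a)) 0)
    (hic : ∀ a : ℝ, 0 ≤ a → n (0, a) = n₀ a) :
    ∀ t a : ℝ, 0 ≤ t → t ≤ a →
      n (t, a) = surv a * (n₀ (a - t) / surv (a - t) +
        ∫ τ in (a - t)..a, ν (τ + t - a, τ) / surv τ) :=
  characteristics_uniqueness_below_diagonal_general μ hμ surv hsurv ν hν n n₀ hpde hic
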